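/- arXiv:2201.10684 — 5 statements merged into one kernel-verified Lean document; each statement's English description precedes it below -/
import Mathlib

section
/- Let A be an n×n real symmetric matrix and v a random vector with i.i.d. Rademacher entries. Then Var(vᵀAv) = 2(‖A‖_F² − Σ_{i=1}^n A_{ii}²), where ‖A‖_F is the Frobenius norm. -/
open MeasureTheory ProbabilityTheory Matrix

/-- The Rademacher distribution on ℝ: ±1 with probability 1/2 each. -/
noncomputable def radMeasure : Measure ℝ :=
  (1/2 : ENNReal) • Measure.dirac 1 + (1/2 : ENNReal) • Measure.dirac (-1)

/-!
Write `vᵀAv = ∑ᵢⱼ Aᵢⱼ vᵢvⱼ`, so that `Var(vᵀAv) = ∑ᵢⱼₖₗ Aᵢⱼ Aₖₗ Cov(vᵢvⱼ, vₖvₗ)`.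
Since `vᵢ² = 1`, the diagonal products `vᵢvᵢ` are constant and contribute nothing. For `i ≠ j`,
independence gives `E[vᵢvⱼ] = 0`, and `E[vᵢvⱼvₖvₗ]` is `1` if every index occurs an even number
of times, i.e. if `(k, l)` is `(i, j)` or `(j, i)`, and `0` otherwise. Hence
`Cov(vᵢvⱼ, vₖvₗ) = [i ≠ j] ([(k, l) = (i, j)] + [(k, l) = (j, i)])`, and the symmetry of `A`
turns the sum into `2 ∑_{i ≠ j} Aᵢⱼ²`.
-/

instance : IsProbabilityMeasure radMeasure :=
  ⟨by simp [radMeasure, ENNReal.inv_two_add_inv_two]⟩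

lemma ae_abs_eq_one_radMeasure : ∀ᵐ x ∂radMeasure, |x| = 1 := by
  simp [radMeasure, ae_dirac_eq]

lemma integral_pow_radMeasure (k : ℕ) :
    ∫ x, x ^ k ∂radMeasure = if Even k then 1 else 0 := by
  have hint (a : ℝ) : Integrable (fun x : ℝ => x ^ k) ((1/2 : ENNReal) • Measure.dirac a) :=
    (integrable_dirac (by simp)).smul_measure (by simp)
  rw [radMeasure, integral_add_measure (hint 1) (hint (-1)), integral_smul_measure,
    integral_smul_measure, integral_dirac, integral_dirac]
  rcases Nat.even_or_odd k with hk | hk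
  · simp [hk.neg_one_pow, hk]
    norm_num
  · simp [hk.neg_one_pow, Nat.not_even_iff_odd.2 hk]

lemma Multiset.forall_even_count_four_iff {ι : Type*} [DecidableEq ι] {i j k l : ι}
    (hij : i ≠ j) :
    (∀ t, Even (count t {i, j, k, l})) ↔ (i = k ∧ j = l) ∨ (i = l ∧ j = k) := by
  constructor
  · intro h
    have hi := h i
    have hj := h j
    simp only [insert_eq_cons, count_cons, count_singleton] at hi hj
    by_cases hik : i = k <;> by_cases hil : i = l <;> by_cases hjk : j = k <;>
      by_cases hjl : j = l <;> simp_all [Nat.even_iff]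
  · rintro (⟨rfl, rfl⟩ | ⟨rfl, rfl⟩) t <;>
      by_cases hti : t = i <;> by_cases htj : t = j <;> simp_all

lemma Matrix.IsSymm.sum_mul_mul_offDiag_pairings {ι : Type*} [Fintype ι] [DecidableEq ι]
    {A : Matrix ι ι ℝ} (hA : A.IsSymm) :
    ∑ p : ι × ι, ∑ q : ι × ι, A p.1 p.2 * A q.1 q.2 *
      (if p.1 = p.2 then 0 else
        (if p.1 = q.1 ∧ p.2 = q.2 then 1 else 0) + (if p.1 = q.2 ∧ p.2 = q.1 then 1 else 0)) =
      2 * ((∑ i, ∑ j, A i j ^ 2) - ∑ i, A i i ^ 2) := by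
  have hinner (i j : ι) : ∑ q : ι × ι, A i j * A q.1 q.2 *
      (if i = j then 0 else
        (if i = q.1 ∧ j = q.2 then 1 else 0) + (if i = q.2 ∧ j = q.1 then 1 else 0)) =
      if i = j then 0 else 2 * A i j ^ 2 := by
    split_ifs
    · simp
    · simp [Fintype.sum_prod_type, mul_add, ite_and, Finset.sum_add_distrib, hA.apply]
      ring
  have hoff (i j : ι) : (if i = j then 0 else 2 * A i j ^ 2) =
      2 * A i j ^ 2 - if i = j then 2 * A i j ^ 2 else 0 := by
    split_ifs <;> ring
  simp only [Fintype.sum_prod_type, hinner, hoff, Finset.sum_sub_distrib, Finset.sum_ite_eq,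
    Finset.mem_univ, if_true, ← Finset.mul_sum]
  ring

lemma Matrix.dotProduct_mulVec_eq_sum_prod {ι : Type*} [Fintype ι] (A : Matrix ι ι ℝ) (x : ι → ℝ) :
    x ⬝ᵥ A *ᵥ x = ∑ p : ι × ι, A p.1 p.2 * (x p.1 * x p.2) := by
  simp only [dotProduct, mulVec, Finset.mul_sum, Fintype.sum_prod_type]
  exact Finset.sum_congr rfl fun i _ => Finset.sum_congr rfl fun j _ => by ring

namespace ProbabilityTheory

variable {Ω : Type*} [MeasurableSpace Ω] {μ : Measure Ω}

lemma covariance_congr_left {X X' Y : Ω → ℝ} (h : X =ᵐ[μ] X') :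
    cov[X, Y; μ] = cov[X', Y; μ] := by
  rw [covariance, covariance, integral_congr_ae h]
  exact integral_congr_ae (by filter_upwards [h] with ω hω; rw [hω])

lemma variance_fun_sum_mul {κ : Type*} [Fintype κ] [IsFiniteMeasure μ] {Z : κ → Ω → ℝ}
    (hZ : ∀ k, MemLp (Z k) 2 μ) (a : κ → ℝ) :
    Var[fun ω => ∑ k, a k * Z k ω; μ] = ∑ k, ∑ l, a k * a l * cov[Z k, Z l; μ] := by
  have haZ (k : κ) : MemLp (fun ω => a k * Z k ω) 2 μ := (hZ k).const_mul (a k)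
  rw [← covariance_self (memLp_finsetSum _ fun k _ => haZ k).aestronglyMeasurable.aemeasurable,
    covariance_fun_sum_fun_sum haZ haZ]
  simp only [covariance_const_mul_left, covariance_const_mul_right]
  exact Finset.sum_congr rfl fun k _ => Finset.sum_congr rfl fun l _ => by ring

end ProbabilityTheory

section Rademacher

variable {Ω ι : Type*} [MeasurableSpace Ω] {μ : Measure Ω}

section Law

variable {X : Ω → ℝ} (hX : μ.map X = radMeasure)
include hX

/-- `Measure.map` of a function that is not a.e.-measurable is `0` by convention. -/
lemma aemeasurable_of_map_eq_radMeasure : AEMeasurable X μ := by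
  refine AEMeasurable.of_map_ne_zero ?_
  rw [hX]
  exact IsProbabilityMeasure.ne_zero _

lemma ae_abs_eq_one_of_map_eq_radMeasure : ∀ᵐ ω ∂μ, |X ω| = 1 := by
  refine ae_of_ae_map (p := fun x => |x| = 1) (aemeasurable_of_map_eq_radMeasure hX) ?_
  rw [hX]
  exact ae_abs_eq_one_radMeasure

lemma integral_pow_of_map_eq_radMeasure (k : ℕ) :
    ∫ ω, X ω ^ k ∂μ = if Even k then 1 else 0 := by
  rw [← integral_pow_radMeasure, ← hX,
    integral_map (aemeasurable_of_map_eq_radMeasure hX) (by fun_prop)]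

lemma mul_self_ae_eq_one_of_map_eq_radMeasure : X * X =ᵐ[μ] 1 := by
  filter_upwards [ae_abs_eq_one_of_map_eq_radMeasure hX] with ω hω
  rw [Pi.mul_apply, ← abs_mul_abs_self, hω, one_mul, Pi.one_apply]

lemma memLp_mul_of_map_eq_radMeasure [IsFiniteMeasure μ] {Y : Ω → ℝ}
    (hY : μ.map Y = radMeasure) (p : ENNReal) : MemLp (X * Y) p μ := by
  refine MemLp.of_bound ((aemeasurable_of_map_eq_radMeasure hX).mul
    (aemeasurable_of_map_eq_radMeasure hY)).aestronglyMeasurable 1 ?_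
  filter_upwards [ae_abs_eq_one_of_map_eq_radMeasure hX, ae_abs_eq_one_of_map_eq_radMeasure hY]
    with ω hXω hYω
  simp [hXω, hYω]

end Law

section Family

variable [Fintype ι] [DecidableEq ι] {X : ι → Ω → ℝ} (hlaw : ∀ i, μ.map (X i) = radMeasure)
  (hind : iIndepFun X μ)
include hlaw hind

lemma integral_multiset_prod_of_iIndepFun (s : Multiset ι) :
    ∫ ω, (s.map fun i => X i ω).prod ∂μ = if ∀ i, Even (s.count i) then 1 else 0 := by
  have hprod (ω : Ω) : (s.map fun i => X i ω).prod = ∏ i, X i ω ^ s.count i := by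
    rw [Finset.prod_multiset_map_count]
    exact Finset.prod_subset (Finset.subset_univ _) fun i _ hi => by
      rw [Multiset.count_eq_zero_of_notMem (by simpa using hi), pow_zero]
  simp_rw [hprod]
  rw [hind.integral_fun_prod_comp (f := fun i x => x ^ s.count i)
    (fun i => aemeasurable_of_map_eq_radMeasure (hlaw i)) (fun i => by fun_prop)]
  simp_rw [integral_pow_of_map_eq_radMeasure (hlaw _)]
  exact Fintype.prod_boole

lemma covariance_mul_mul_of_iIndepFun [IsProbabilityMeasure μ] (i j k l : ι) :
    cov[X i * X j, X k * X l; μ] =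
      if i = j then 0 else (if i = k ∧ j = l then 1 else 0) + (if i = l ∧ j = k then 1 else 0) := by
  by_cases hij : i = j
  · subst hij
    rw [if_pos rfl, covariance_congr_left (mul_self_ae_eq_one_of_map_eq_radMeasure (hlaw i))]
    exact covariance_const_left 1
  have hmoment (s : Multiset ι) := integral_multiset_prod_of_iIndepFun hlaw hind s
  have h2 : μ[X i * X j] = 0 := by
    have hpair := hmoment {i, j}
    rw [if_neg fun heven => by simpa [hij] using heven i] at hpair
    simpa using hpair
  have h4 : μ[X i * X j * (X k * X l)] =
      if ∀ t, Even (Multiset.count t {i, j, k, l}) then 1 else 0 := by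
    rw [← hmoment]
    simp [mul_assoc]
  simp only [Multiset.forall_even_count_four_iff hij] at h4
  rw [covariance_eq_sub (memLp_mul_of_map_eq_radMeasure (hlaw i) (hlaw j) 2)
    (memLp_mul_of_map_eq_radMeasure (hlaw k) (hlaw l) 2), h2, h4, zero_mul, sub_zero, if_neg hij]
  by_cases h : i = k ∧ j = l
  · obtain ⟨rfl, rfl⟩ := h
    simp [hij, Ne.symm hij]
  · simp [h]

end Family

theorem variance_dotProduct_mulVec_of_iIndepFun [Fintype ι] [DecidableEq ι]
    [IsProbabilityMeasure μ] {X : ι → Ω → ℝ} (hlaw : ∀ i, μ.map (X i) = radMeasure)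
    (hind : iIndepFun X μ) {A : Matrix ι ι ℝ} (hA : A.IsSymm) :
    Var[fun ω => (fun i => X i ω) ⬝ᵥ A *ᵥ (fun i => X i ω); μ] =
      2 * ((∑ i, ∑ j, A i j ^ 2) - ∑ i, A i i ^ 2) := by
  have hquad : (fun ω => (fun i => X i ω) ⬝ᵥ A *ᵥ (fun i => X i ω)) =
      fun ω => ∑ p : ι × ι, A p.1 p.2 * (X p.1 * X p.2) ω :=
    funext fun ω => A.dotProduct_mulVec_eq_sum_prod _
  have hvar := variance_fun_sum_mul (μ := μ) (Z := fun p : ι × ι => X p.1 * X p.2)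
    (fun p => memLp_mul_of_map_eq_radMeasure (hlaw p.1) (hlaw p.2) 2) fun p => A p.1 p.2
  beta_reduce at hvar
  rw [hquad, hvar]
  simp only [covariance_mul_mul_of_iIndepFun hlaw hind]
  exact hA.sum_mul_mul_offDiag_pairings

end Rademacher

theorem variance_quadratic_form_rademacher_general
    {n : ℕ} (A : Matrix (Fin n) (Fin n) ℝ) (hA : A.IsSymm)
    {Ω : Type*} [MeasureSpace Ω] [IsProbabilityMeasure (ℙ : Measure Ω)]
    (v : Ω → Fin n → ℝ)
    (hdist : ∀ i, Measure.map (fun ω => v ω i) ℙ = radMeasure)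
    (hindep : iIndepFun (fun i ω => v ω i) ℙ) :
    variance (fun ω => v ω ⬝ᵥ A.mulVec (v ω)) ℙ =
      2 * ((∑ i, ∑ j, A i j ^ 2) - ∑ i, A i i ^ 2) :=
  variance_dotProduct_mulVec_of_iIndepFun hdist hindep hA

theorem variance_quadratic_form_rademacher
    {n : ℕ} (A : Matrix (Fin n) (Fin n) ℝ) (hA : A.IsSymm)
    {Ω : Type*} [MeasureSpace Ω] [IsProbabilityMeasure (ℙ : Measure Ω)]
    (v : Ω → Fin n → ℝ)
    (hmeas : ∀ i, Measurable (fun ω => v ω i))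
    (hdist : ∀ i, Measure.map (fun ω => v ω i) ℙ = radMeasure)
    (hindep : iIndepFun (fun i ω => v ω i) ℙ) :
    variance (fun ω => v ω ⬝ᵥ A.mulVec (v ω)) ℙ =
      2 * ((∑ i, ∑ j, A i j ^ 2) - ∑ i, A i i ^ 2) :=
  variance_quadratic_form_rademacher_general A hA v hdist hindep
end

section
/- Let A ∈ ℝ^{n×n} and R^s ∈ ℝ^n the Rademacher diagonal estimator using s independent Rademacher query vectors, with s > 2 ln(2n/δ)/ε². Then with probability at least 1 − δ, Σ_{i=1}^n |R_i^s − A_{ii}|² ≤ ε² Σ_{i=1}^n (‖A_i‖₂² − A_{ii}²), i.e. ‖R^s − diag(A)‖₂² ≤ ε²(‖A‖_F² − ‖diag(A)‖₂²). -/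
open MeasureTheory ProbabilityTheory Matrix

/-!
Fix a row `i`. Since `(v_k^i)² = 1`, the scaled error `s (R_i - A_ii)` is `∑_k Y_k` with
`Y_k = v_k^i ∑_{j ≠ i} A_ij v_k^j`. The inner sum is sub-Gaussian with variance proxy
`σ_i² = ∑_{j ≠ i} A_ij²`, and multiplying it by the independent sign `v_k^i` keeps it so. The `Y_k`
depend on disjoint blocks of query entries, hence are independent, so `∑_k Y_k` is sub-Gaussian
with proxy `s σ_i²` and `P(|R_i - A_ii|² > ε² σ_i²) ≤ 2 exp(-s ε² / 2)`. A union bound over the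
`n` rows and the lower bound on `s` finish the proof.
-/

open Real
open scoped NNReal

namespace ProbabilityTheory

variable {Ω : Type*} {mΩ : MeasurableSpace Ω} {μ : Measure Ω}

lemma iIndepFun.curry {ι κ 𝓧 : Type*} [MeasurableSpace 𝓧] {X : ι → κ → Ω → 𝓧}
    (mX : ∀ i j, Measurable (X i j)) (h : iIndepFun (fun p : ι × κ ↦ X p.1 p.2) μ) :
    iIndepFun (fun i ω j ↦ X i j ω) μ := by
  have := h.isProbabilityMeasure
  have : ∀ i j, IsProbabilityMeasure (μ.map (X i j)) :=
    fun i j ↦ Measure.isProbabilityMeasure_map (mX i j).aemeasurable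
  have hrow : ∀ i, μ.map (fun ω j ↦ X i j ω) = Measure.infinitePi fun j ↦ μ.map (X i j) :=
    fun i ↦ (h.precomp (Prod.mk_right_injective i)).map_fun_eq_infinitePi_map fun j ↦ mX i j
  have hall : μ.map (fun ω (p : ι × κ) ↦ X p.1 p.2 ω)
      = Measure.infinitePi fun p ↦ μ.map (X p.1 p.2) :=
    h.map_fun_eq_infinitePi_map fun p ↦ mX p.1 p.2
  rw [iIndepFun_iff_map_fun_eq_infinitePi_map fun i ↦ measurable_pi_lambda _ (mX i)]
  simp_rw [hrow]
  rw [← Measure.infinitePi_map_curry (fun i j ↦ μ.map (X i j)), ← hall,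
    Measure.map_map (by fun_prop) (by fun_prop)]
  rfl

/-- Since `x = ±1`, `exp (t x Z) = (1 + x)/2 · exp (t Z) + (1 - x)/2 · exp (-t Z)`, and
independence splits the expectation of each term. -/
lemma HasSubgaussianMGF.sign_mul [IsProbabilityMeasure μ] {x Z : Ω → ℝ} {c : ℝ≥0}
    (hx : AEMeasurable x μ) (hsign : ∀ᵐ ω ∂μ, x ω = 1 ∨ x ω = -1)
    (hZ : HasSubgaussianMGF Z c μ) (hind : IndepFun x Z μ) :
    HasSubgaussianMGF (fun ω ↦ x ω * Z ω) c μ := by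
  have hweighted : ∀ b t : ℝ,
      Integrable (fun ω ↦ (1 + b * x ω) / 2 * exp (t * Z ω)) μ ∧
      ∫ ω, (1 + b * x ω) / 2 * exp (t * Z ω) ∂μ = (∫ ω, (1 + b * x ω) / 2 ∂μ) * mgf Z μ t := by
    intro b t
    have hw : AEStronglyMeasurable (fun ω ↦ (1 + b * x ω) / 2) μ := by fun_prop
    refine ⟨(hZ.integrable_exp_mul t).bdd_mul hw (c := (1 + |b|) / 2) ?_, ?_⟩
    · filter_upwards [hsign] with ω h
      have hx1 : |x ω| = 1 := by rcases h with h | h <;> simp [h]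
      rw [Real.norm_eq_abs, abs_div, abs_two]
      gcongr
      calc |1 + b * x ω| ≤ |1| + |b * x ω| := abs_add_le _ _
        _ = 1 + |b| := by rw [abs_mul, hx1, abs_one, mul_one]
    · exact (hind.comp (φ := fun y ↦ (1 + b * y) / 2) (ψ := fun z ↦ exp (t * z))
        (by fun_prop) (by fun_prop)).integral_fun_mul_eq_mul_integral hw
        (hZ.integrable_exp_mul t).aestronglyMeasurable
  have hsplit : ∀ t : ℝ, (fun ω ↦ exp (t * (x ω * Z ω))) =ᵐ[μ]
      fun ω ↦ (1 + 1 * x ω) / 2 * exp (t * Z ω) + (1 + -1 * x ω) / 2 * exp (-t * Z ω) := by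
    intro t
    filter_upwards [hsign] with ω h
    rcases h with h | h <;> simp [h]
  have hmass : (∫ ω, (1 + 1 * x ω) / 2 ∂μ) + ∫ ω, (1 + -1 * x ω) / 2 ∂μ = 1 := by
    have hint : ∀ b : ℝ, Integrable (fun ω ↦ (1 + b * x ω) / 2) μ := fun b ↦ by
      simpa using (hweighted b 0).1
    rw [← integral_add (hint 1) (hint (-1))]
    ring_nf
    simp
  have hnonneg : ∀ b : ℝ, |b| = 1 → 0 ≤ ∫ ω, (1 + b * x ω) / 2 ∂μ := fun b hb ↦ by
    refine integral_nonneg_of_ae ?_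
    filter_upwards [hsign] with ω h
    rcases h with h | h <;> simp only [h, Pi.zero_apply] <;> linarith [abs_le.1 hb.le]
  refine ⟨fun t ↦ ((hweighted 1 t).1.add (hweighted (-1) (-t)).1).congr (hsplit t).symm,
    fun t ↦ ?_⟩
  calc mgf (fun ω ↦ x ω * Z ω) μ t
      = (∫ ω, (1 + 1 * x ω) / 2 ∂μ) * mgf Z μ t
        + (∫ ω, (1 + -1 * x ω) / 2 ∂μ) * mgf Z μ (-t) := by
        rw [mgf, integral_congr_ae (hsplit t),
          integral_add (hweighted 1 t).1 (hweighted (-1) (-t)).1,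
          (hweighted 1 t).2, (hweighted (-1) (-t)).2]
    _ ≤ (∫ ω, (1 + 1 * x ω) / 2 ∂μ) * exp (c * t ^ 2 / 2)
        + (∫ ω, (1 + -1 * x ω) / 2 ∂μ) * exp (c * t ^ 2 / 2) := by
        gcongr
        · exact hnonneg 1 (by simp)
        · exact hZ.mgf_le t
        · exact hnonneg (-1) (by simp)
        · simpa using hZ.mgf_le (-t)
    _ = exp (c * t ^ 2 / 2) := by rw [← add_mul, hmass, one_mul]

lemma HasSubgaussianMGF.measure_mul_lt_sq_le [IsFiniteMeasure μ] {X : Ω → ℝ} {c : ℝ≥0}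
    (h : HasSubgaussianMGF X c μ) {a : ℝ} (ha : 0 ≤ a) :
    μ {ω | a * c < X ω ^ 2} ≤ ENNReal.ofReal (2 * exp (-a / 2)) := by
  -- for `c = 0` the Chernoff bound reads `exp (-r² / 0) = 1`; use `X = 0` a.e. instead
  rcases eq_or_ne c 0 with rfl | hc
  · rw [measure_eq_zero_iff_ae_notMem.2 (by
      filter_upwards [h.ae_eq_zero_of_hasSubgaussianMGF_zero] with ω hω
      simp [hω])]
    exact bot_le
  have hc' : (0 : ℝ) < c := by positivity
  obtain ⟨r, hr0, hr⟩ : ∃ r : ℝ, 0 ≤ r ∧ r ^ 2 = a * c :=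
    ⟨√(a * c), sqrt_nonneg _, sq_sqrt (by positivity)⟩
  have htail : ∀ Y : Ω → ℝ, HasSubgaussianMGF Y c μ →
      μ {ω | r ≤ Y ω} ≤ ENNReal.ofReal (exp (-a / 2)) := fun Y hY ↦ by
    rw [ENNReal.le_ofReal_iff_toReal_le (measure_ne_top _ _) (exp_pos _).le]
    convert hY.measure_ge_le hr0 using 2
    · rfl
    rw [hr]
    field_simp
  calc μ {ω | a * c < X ω ^ 2}
      ≤ μ ({ω | r ≤ X ω} ∪ {ω | r ≤ -X ω}) := by
        refine measure_mono fun ω hω ↦ ?_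
        have : r < |X ω| := by rwa [← abs_of_nonneg hr0, ← sq_lt_sq, hr]
        rcases lt_abs.1 this with h | h
        exacts [Or.inl h.le, Or.inr h.le]
    _ ≤ μ {ω | r ≤ X ω} + μ {ω | r ≤ -X ω} := measure_union_le _ _
    _ ≤ ENNReal.ofReal (exp (-a / 2)) + ENNReal.ofReal (exp (-a / 2)) :=
        add_le_add (htail X h) (htail _ h.neg)
    _ = ENNReal.ofReal (2 * exp (-a / 2)) := by
        rw [← ENNReal.ofReal_add (exp_pos _).le (exp_pos _).le, two_mul]

end ProbabilityTheory

lemma MeasureTheory.ofReal_one_sub_le_measure_forall {Ω ι : Type*} {mΩ : MeasurableSpace Ω}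
    {μ : Measure Ω} [IsProbabilityMeasure μ] [Fintype ι] {P : ι → Ω → Prop} {p δ : ℝ}
    (hP : ∀ i, μ {ω | ¬ P i ω} ≤ ENNReal.ofReal p) (hδ : 0 ≤ δ)
    (hpδ : Fintype.card ι * p ≤ δ) :
    ENNReal.ofReal (1 - δ) ≤ μ {ω | ∀ i, P i ω} := by
  have hbad : μ {ω | ∀ i, P i ω}ᶜ ≤ ENNReal.ofReal δ :=
    calc μ {ω | ∀ i, P i ω}ᶜ = μ (⋃ i, {ω | ¬ P i ω}) := by congr 1; ext; simp
      _ ≤ ∑ i, μ {ω | ¬ P i ω} := measure_iUnion_fintype_le _ _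
      _ ≤ ∑ _i : ι, ENNReal.ofReal p := Finset.sum_le_sum fun i _ ↦ hP i
      _ = ENNReal.ofReal (Fintype.card ι * p) := by
        rw [Finset.sum_const, Finset.card_univ, nsmul_eq_mul,
          ENNReal.ofReal_mul (Nat.cast_nonneg _), ENNReal.ofReal_natCast]
      _ ≤ ENNReal.ofReal δ := ENNReal.ofReal_le_ofReal hpδ
  calc ENNReal.ofReal (1 - δ) = 1 - ENNReal.ofReal δ := by
        rw [ENNReal.ofReal_sub _ hδ, ENNReal.ofReal_one]
    _ ≤ 1 - μ {ω | ∀ i, P i ω}ᶜ := tsub_le_tsub_left hbad 1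
    _ ≤ μ {ω | ∀ i, P i ω} := by
        rw [tsub_le_iff_right, ← measure_univ (μ := μ), ← Set.union_compl_self {ω | ∀ i, P i ω}]
        exact measure_union_le _ _

lemma natCast_mul_two_mul_exp_le_of_lt {n : ℕ} {s ε δ : ℝ} (hε : 0 < ε) (hδ : 0 < δ)
    (hs : s > 2 * log (2 * n / δ) / ε ^ 2) :
    n * (2 * exp (-s * ε ^ 2 / 2)) ≤ δ := by
  rcases n.eq_zero_or_pos with rfl | hn
  · simpa using hδ.le
  have hlog : log (2 * n / δ) < s * ε ^ 2 / 2 := by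
    rw [gt_iff_lt, div_lt_iff₀ (by positivity)] at hs
    linarith
  have hlt : 2 * n < exp (s * ε ^ 2 / 2) * δ := by
    rw [← div_lt_iff₀ hδ]
    exact (log_lt_iff_lt_exp (by positivity)).1 hlog
  rw [neg_mul, neg_div, exp_neg, ← mul_assoc, ← div_eq_mul_inv, div_le_iff₀ (exp_pos _)]
  linarith

lemma Matrix.mul_mulVec_apply_sub_diag {α ι : Type*} [CommRing α] [Fintype ι] [DecidableEq ι]
    (A : Matrix ι ι α) (w : ι → α) (i : ι) (hw : w i * w i = 1) :
    w i * (A *ᵥ w) i - A i i = w i * ∑ j ∈ Finset.univ.erase i, A i j * w j := by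
  rw [mulVec, dotProduct, ← Finset.add_sum_erase _ _ (Finset.mem_univ i)]
  linear_combination A i i * hw

section Rademacher

variable {Ω : Type*} {mΩ : MeasurableSpace Ω} {μ : Measure Ω}

lemma ae_eq_one_or_neg_one_radMeasure : ∀ᵐ x ∂radMeasure, x = 1 ∨ x = -1 := by
  simp [radMeasure, ae_add_measure_iff]

lemma integral_id_radMeasure : ∫ x, x ∂radMeasure = 0 := by
  rw [radMeasure, integral_add_measure, integral_smul_measure, integral_smul_measure,
    integral_dirac, integral_dirac]
  · norm_num
  all_goals exact (integrable_dirac (by simp)).smul_measure (by simp)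

lemma ae_eq_one_or_neg_one_of_map_eq_radMeasure {X : Ω → ℝ} (hX : AEMeasurable X μ)
    (hlaw : μ.map X = radMeasure) : ∀ᵐ ω ∂μ, X ω = 1 ∨ X ω = -1 :=
  ae_of_ae_map hX (hlaw ▸ ae_eq_one_or_neg_one_radMeasure)

variable [IsProbabilityMeasure μ]

lemma hasSubgaussianMGF_of_map_eq_radMeasure {X : Ω → ℝ} (hX : AEMeasurable X μ)
    (hlaw : μ.map X = radMeasure) : HasSubgaussianMGF X 1 μ := by
  have hmean : μ[X] = 0 := by
    rw [← integral_id_radMeasure, ← hlaw]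
    exact (integral_map hX aestronglyMeasurable_id).symm
  have hIcc : ∀ᵐ ω ∂μ, X ω ∈ Set.Icc (-1) 1 := by
    filter_upwards [ae_eq_one_or_neg_one_of_map_eq_radMeasure hX hlaw] with ω h
    rcases h with h | h <;> simp [h]
  convert hasSubgaussianMGF_of_mem_Icc_of_integral_eq_zero hX hIcc hmean
  ext
  norm_num

lemma hasSubgaussianMGF_mul_sum_of_map_eq_radMeasure {κ : Type*} {x : κ → Ω → ℝ}
    (hmeas : ∀ j, Measurable (x j)) (hlaw : ∀ j, μ.map (x j) = radMeasure)
    (hind : iIndepFun x μ) {i : κ} {t : Finset κ} (hi : i ∉ t) (a : κ → ℝ) :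
    HasSubgaussianMGF (fun ω ↦ x i ω * ∑ j ∈ t, a j * x j ω) (∑ j ∈ t, ‖a j‖₊ ^ 2) μ := by
  have hsum : HasSubgaussianMGF (fun ω ↦ ∑ j ∈ t, a j * x j ω) (∑ j ∈ t, ‖a j‖₊ ^ 2) μ :=
    HasSubgaussianMGF.sum_of_iIndepFun (hind.comp (fun j y ↦ a j * y) fun j ↦ by fun_prop)
      fun j _ ↦ by
        have hparam : ‖a j‖₊ ^ 2 = ⟨a j ^ 2, sq_nonneg _⟩ * 1 := by
          ext
          rw [NNReal.coe_pow, coe_nnnorm, Real.norm_eq_abs, sq_abs]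
          exact (mul_one _).symm
        exact hparam ▸ (hasSubgaussianMGF_of_map_eq_radMeasure (hmeas j).aemeasurable
          (hlaw j)).const_mul (a j)
  have hindep : IndepFun (x i) (fun ω ↦ ∑ j ∈ t, a j * x j ω) μ := by
    have := (hind.indepFun_finset {i} t (Finset.disjoint_singleton_left.2 hi) hmeas).comp
      (_mγ := Real.measurableSpace)
      (φ := fun u : ({i} : Finset κ) → ℝ ↦ u ⟨i, Finset.mem_singleton_self i⟩)
      (ψ := fun u : t → ℝ ↦ ∑ j : t, a j * u j)
      (measurable_pi_apply (⟨i, Finset.mem_singleton_self i⟩ : ({i} : Finset κ))) (by fun_prop)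
    convert this using 1
    · rfl
    funext ω
    exact (Finset.sum_coe_sort t fun j ↦ a j * x j ω).symm
  exact hsum.sign_mul (hmeas i).aemeasurable
    (ae_eq_one_or_neg_one_of_map_eq_radMeasure (hmeas i).aemeasurable (hlaw i)) hindep

end Rademacher

section DiagonalEstimator

variable {n s : ℕ} {Ω : Type*} [MeasureSpace Ω] [IsProbabilityMeasure (ℙ : Measure Ω)]
  {v : Ω → Fin s → Fin n → ℝ}

lemma hasSubgaussianMGF_sum_mul_offDiag (hmeas : ∀ k j, Measurable (fun ω ↦ v ω k j))
    (hdist : ∀ k j, Measure.map (fun ω ↦ v ω k j) ℙ = radMeasure)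
    (hindep : iIndepFun (fun p : Fin s × Fin n ↦ fun ω ↦ v ω p.1 p.2) ℙ)
    (A : Matrix (Fin n) (Fin n) ℝ) (i : Fin n) :
    HasSubgaussianMGF (fun ω ↦ ∑ k, v ω k i * ∑ j ∈ Finset.univ.erase i, A i j * v ω k j)
      (s * ∑ j ∈ Finset.univ.erase i, ‖A i j‖₊ ^ 2) ℙ := by
  have hrows : iIndepFun (fun k ω j ↦ v ω k j) ℙ := iIndepFun.curry hmeas hindep
  have := HasSubgaussianMGF.sum_of_iIndepFun (s := Finset.univ)
    (hrows.comp (fun _ u ↦ u i * ∑ j ∈ Finset.univ.erase i, A i j * u j) fun _ ↦ by fun_prop)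
    fun k _ ↦ hasSubgaussianMGF_mul_sum_of_map_eq_radMeasure (hmeas k) (hdist k)
      (hindep.precomp (Prod.mk_right_injective k)) (Finset.notMem_erase i _) (A i)
  rwa [Finset.sum_const, Finset.card_univ, Fintype.card_fin, nsmul_eq_mul] at this

lemma measure_diag_estimator_error_gt_le (hs : 0 < s) (A : Matrix (Fin n) (Fin n) ℝ)
    (hmeas : ∀ k j, Measurable (fun ω ↦ v ω k j))
    (hdist : ∀ k j, Measure.map (fun ω ↦ v ω k j) ℙ = radMeasure)
    (hindep : iIndepFun (fun p : Fin s × Fin n ↦ fun ω ↦ v ω p.1 p.2) ℙ) (i : Fin n) (ε : ℝ) :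
    ℙ {ω | ε ^ 2 * ((∑ j, A i j ^ 2) - A i i ^ 2)
        < |(1 / (s : ℝ)) * ∑ k, v ω k i * (A *ᵥ v ω k) i - A i i| ^ 2}
      ≤ ENNReal.ofReal (2 * exp (-s * ε ^ 2 / 2)) := by
  have hs' : (s : ℝ) ≠ 0 := by positivity
  set S : Ω → ℝ := fun ω ↦ ∑ k, v ω k i * ∑ j ∈ Finset.univ.erase i, A i j * v ω k j
  have herr : ∀ᵐ ω ∂ℙ, (1 / (s : ℝ)) * ∑ k, v ω k i * (A *ᵥ v ω k) i - A i i = S ω / s := by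
    filter_upwards [ae_all_iff.2 fun k ↦ ae_eq_one_or_neg_one_of_map_eq_radMeasure
      (hmeas k i).aemeasurable (hdist k i)] with ω hsign
    have hrow : ∀ k, v ω k i * (A *ᵥ v ω k) i - A i i
        = v ω k i * ∑ j ∈ Finset.univ.erase i, A i j * v ω k j := fun k ↦
      A.mul_mulVec_apply_sub_diag _ i (by rcases hsign k with h | h <;> simp [h])
    simp only [S, ← Finset.sum_congr rfl fun k _ ↦ hrow k, Finset.sum_sub_distrib,
      Finset.sum_const, Finset.card_univ, Fintype.card_fin, nsmul_eq_mul]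
    field_simp
  have hvar : (∑ j, A i j ^ 2) - A i i ^ 2 = ∑ j ∈ Finset.univ.erase i, A i j ^ 2 :=
    (Finset.sum_erase_eq_sub (Finset.mem_univ i)).symm
  calc _ ≤ ℙ {ω | s * ε ^ 2 * ((s * ∑ j ∈ Finset.univ.erase i, ‖A i j‖₊ ^ 2 : ℝ≥0) : ℝ)
        < S ω ^ 2} := by
        refine measure_mono_ae (herr.mono fun ω hω (hlt : _ < _) ↦ show _ < _ from ?_)
        rw [hω, hvar, sq_abs, div_pow, lt_div_iff₀ (by positivity)] at hlt
        push_cast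
        simp only [Real.norm_eq_abs, sq_abs]
        linarith
    _ ≤ ENNReal.ofReal (2 * exp (-(s * ε ^ 2) / 2)) :=
        (hasSubgaussianMGF_sum_mul_offDiag hmeas hdist hindep A i).measure_mul_lt_sq_le
          (by positivity)
    _ = ENNReal.ofReal (2 * exp (-s * ε ^ 2 / 2)) := by ring_nf

end DiagonalEstimator

theorem rademacher_diagonal_estimator_full_diagonal
    {n s : ℕ} (hs : 0 < s) (A : Matrix (Fin n) (Fin n) ℝ)
    {Ω : Type*} [MeasureSpace Ω] [IsProbabilityMeasure (ℙ : Measure Ω)]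
    (v : Ω → Fin s → Fin n → ℝ)
    (hmeas : ∀ k j, Measurable (fun ω => v ω k j))
    (hdist : ∀ k j, Measure.map (fun ω => v ω k j) ℙ = radMeasure)
    (hindep : iIndepFun
      (fun p : Fin s × Fin n => fun ω => v ω p.1 p.2) ℙ)
    (R : Ω → Fin n → ℝ)
    (hR : R = fun ω i => (1 / (s : ℝ)) * ∑ k, v ω k i * A.mulVec (v ω k) i)
    (ε δ : ℝ) (hε : 0 < ε) (hδ : δ ∈ Set.Ioo (0:ℝ) 1)
    (hquery : (s : ℝ) > 2 * Real.log (2 * n / δ) / ε ^ 2) :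
    ENNReal.ofReal (1 - δ) ≤
      ℙ {ω | ∑ i, |R ω i - A i i| ^ 2 ≤ ε ^ 2 * ∑ i, ((∑ j, A i j ^ 2) - A i i ^ 2)} := by
  refine (ofReal_one_sub_le_measure_forall
    (P := fun i ω ↦ |R ω i - A i i| ^ 2 ≤ ε ^ 2 * ((∑ j, A i j ^ 2) - A i i ^ 2))
    (p := 2 * exp (-s * ε ^ 2 / 2)) (fun i ↦ ?_) hδ.1.le ?_).trans
    (measure_mono fun ω hω ↦ ?_)
  · subst hR
    simpa only [not_le] using measure_diag_estimator_error_gt_le hs A hmeas hdist hindep i ε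
  · simpa using natCast_mul_two_mul_exp_le_of_lt hε hδ.1 hquery
  · rw [Set.mem_ofPred_eq, Finset.mul_sum]
    exact Finset.sum_le_sum fun i _ ↦ hω i
end

section
/- Let x ~ N(0,1) and y ~ χ²_s be independent, and let ε ∈ (0,1]. Then P(x²/y ≥ ε²) ≤ (1−2λ)^{−1/2} (1+2λε²)^{−s/2} for every λ ∈ (0,1/2); in particular, taking λ = 1/4, P(x²/y ≥ ε²) ≤ √2 · 2^{−sε²/4}. -/
/-!
Chernoff's bound: for `λ ≥ 0`,
`P(ε²y ≤ x²) ≤ E exp(λ(x² - ε²y)) = E exp(λx²) · E exp(-λε²y)` by independence.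
The first factor is a Gaussian integral, `(1 - 2λ)^(-1/2)`; the second is the moment
generating function `(1 - t/r)^(-a)` of the Gamma law, computed by exponential tilting of the
Gamma density. For `λ = 1/4` one uses `2^u ≤ 1 + u` on `[0, 1]` with `u = ε²/2`.
-/

open MeasureTheory ProbabilityTheory Real Set
open scoped ENNReal NNReal

section WithDensity

variable {α : Type*} [MeasurableSpace α] {μ : Measure α} {p : α → ℝ}

lemma integral_withDensity_ofReal (hp : Measurable p) (hp0 : 0 ≤ p) (g : α → ℝ) :
    ∫ x, g x ∂μ.withDensity (fun x ↦ ENNReal.ofReal (p x)) = ∫ x, p x * g x ∂μ := by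
  rw [integral_withDensity_eq_integral_toReal_smul hp.ennreal_ofReal
    (ae_of_all _ fun _ ↦ ENNReal.ofReal_lt_top)]
  simp_rw [ENNReal.toReal_ofReal (hp0 _), smul_eq_mul]

end WithDensity

section Gaussian

variable {v : ℝ≥0} {t : ℝ}

lemma gaussianPDFReal_zero_mul_exp_mul_sq (x : ℝ) :
    gaussianPDFReal 0 v x * exp (t * x ^ 2) =
      (√(2 * π * v))⁻¹ * exp (-(1 / (2 * v) - t) * x ^ 2) := by
  rw [gaussianPDFReal, mul_assoc, ← exp_add]
  congr 2
  ring

lemma mgf_sq_gaussianReal (ht : 2 * v * t < 1) :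
    mgf (fun x ↦ x ^ 2) (gaussianReal 0 v) t = (1 - 2 * v * t) ^ (-(1 : ℝ) / 2) := by
  rcases eq_or_ne v 0 with rfl | hv
  · simp [mgf]
  have hv_pos : (0 : ℝ) < v := by positivity
  rw [mgf, integral_gaussianReal_eq_integral_smul hv]
  simp_rw [smul_eq_mul, gaussianPDFReal_zero_mul_exp_mul_sq, integral_const_mul, integral_gaussian]
  rw [neg_div, rpow_neg (by linarith), ← sqrt_eq_rpow, ← sqrt_inv, ← sqrt_inv,
    ← sqrt_mul (by positivity)]
  congr 1
  have : 1 / (2 * (v : ℝ)) - t ≠ 0 := by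
    rw [div_sub' (by positivity)]; exact div_ne_zero (by linarith) (by positivity)
  field_simp

lemma integrable_exp_mul_sq_gaussianReal (ht : 2 * v * t < 1) :
    Integrable (fun x ↦ exp (t * x ^ 2)) (gaussianReal 0 v) := by
  rw [← mgf_pos_iff (X := fun x ↦ x ^ 2), mgf_sq_gaussianReal ht]
  exact rpow_pos_of_pos (by linarith) _

end Gaussian

section Gamma

variable {a r t : ℝ}

lemma integral_gammaPDFReal (ha : 0 < a) (hr : 0 < r) : ∫ x, gammaPDFReal a r x = 1 := by
  rw [integral_eq_lintegral_of_nonneg_ae (ae_of_all _ (gammaPDFReal_nonneg ha hr))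
    (measurable_gammaPDFReal a r).aestronglyMeasurable]
  change (∫⁻ x, gammaPDF a r x).toReal = 1
  simp [ha, hr]

lemma gammaPDFReal_mul_exp_mul (hr : 0 < r) (ht : t < r) (x : ℝ) :
    gammaPDFReal a r x * exp (t * x) = (1 - t / r) ^ (-a) * gammaPDFReal a (r - t) x := by
  have hrt : 0 < r - t := by linarith
  have hrt_pow : (r - t) ^ a ≠ 0 := (rpow_pos_of_pos hrt a).ne'
  rw [one_sub_div hr.ne', rpow_neg (div_nonneg hrt.le hr.le), ← inv_rpow (div_nonneg hrt.le hr.le),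
    inv_div, div_rpow hr.le hrt.le]
  unfold gammaPDFReal
  split_ifs
  · rw [mul_assoc, ← exp_add]
    field_simp
    ring_nf
  · simp

lemma mgf_id_gammaMeasure (ha : 0 < a) (hr : 0 < r) (ht : t < r) :
    mgf id (gammaMeasure a r) t = (1 - t / r) ^ (-a) := by
  rw [mgf, gammaMeasure, show gammaPDF a r = fun x ↦ ENNReal.ofReal (gammaPDFReal a r x) from rfl,
    integral_withDensity_ofReal (measurable_gammaPDFReal a r) (gammaPDFReal_nonneg ha hr)]
  simp_rw [id, gammaPDFReal_mul_exp_mul hr ht, integral_const_mul,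
    integral_gammaPDFReal ha (sub_pos.2 ht), mul_one]

lemma integrable_exp_mul_gammaMeasure (ha : 0 < a) (hr : 0 < r) (ht : t < r) :
    Integrable (fun x ↦ exp (t * x)) (gammaMeasure a r) := by
  have := isProbabilityMeasure_gammaMeasure ha hr
  refine (mgf_pos_iff (X := id)).1 ?_
  rw [mgf_id_gammaMeasure ha hr ht]
  exact rpow_pos_of_pos (by rw [sub_pos, div_lt_one hr]; exact ht) _

end Gamma

section Transfer

variable {Ω : Type*} [MeasurableSpace Ω] {μ : Measure Ω} {X : Ω → ℝ} {t : ℝ}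

lemma mgf_sq_of_map_eq_gaussianReal {v : ℝ≥0} (hX : μ.map X = gaussianReal 0 v)
    (ht : 2 * v * t < 1) :
    mgf (fun ω ↦ X ω ^ 2) μ t = (1 - 2 * v * t) ^ (-(1 : ℝ) / 2) := by
  have hXm : AEMeasurable X μ := aemeasurable_of_map_neZero (by rw [hX]; infer_instance)
  rw [← mgf_sq_gaussianReal ht, ← hX, mgf_map hXm (by fun_prop)]
  rfl

lemma integrable_exp_mul_sq_of_map_eq_gaussianReal {v : ℝ≥0} (hX : μ.map X = gaussianReal 0 v)
    (ht : 2 * v * t < 1) :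
    Integrable (fun ω ↦ exp (t * X ω ^ 2)) μ := by
  have hXm : AEMeasurable X μ := aemeasurable_of_map_neZero (by rw [hX]; infer_instance)
  have := integrable_exp_mul_sq_gaussianReal ht
  rwa [← hX, integrable_map_measure (by fun_prop) hXm] at this

lemma mgf_of_map_eq_gammaMeasure {a r : ℝ} (hX : μ.map X = gammaMeasure a r) (ha : 0 < a)
    (hr : 0 < r) (ht : t < r) :
    mgf X μ t = (1 - t / r) ^ (-a) := by
  have := isProbabilityMeasure_gammaMeasure ha hr
  have hXm : AEMeasurable X μ := aemeasurable_of_map_neZero (by rw [hX]; infer_instance)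
  rw [← mgf_id_map hXm, hX, mgf_id_gammaMeasure ha hr ht]

lemma integrable_exp_mul_of_map_eq_gammaMeasure {a r : ℝ} (hX : μ.map X = gammaMeasure a r)
    (ha : 0 < a) (hr : 0 < r) (ht : t < r) :
    Integrable (fun ω ↦ exp (t * X ω)) μ := by
  have := isProbabilityMeasure_gammaMeasure ha hr
  have hXm : AEMeasurable X μ := aemeasurable_of_map_neZero (by rw [hX]; infer_instance)
  have := integrable_exp_mul_gammaMeasure ha hr ht
  rwa [← hX, integrable_map_measure (by fun_prop) hXm] at this

end Transfer

lemma measure_mul_le_le_ofReal_mgf_mul_mgf {Ω : Type*} [MeasurableSpace Ω] {μ : Measure Ω}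
    [IsFiniteMeasure μ] {X Y : Ω → ℝ} (hXY : IndepFun X Y μ) {c t : ℝ} (ht : 0 ≤ t)
    (hX : Integrable (fun ω ↦ exp (t * X ω)) μ)
    (hY : Integrable (fun ω ↦ exp (-(t * c) * Y ω)) μ) :
    μ {ω | c * Y ω ≤ X ω} ≤ ENNReal.ofReal (mgf X μ t * mgf Y μ (-(t * c))) := by
  set Z : Ω → ℝ := fun ω ↦ -(c * Y ω)
  have hXZ : IndepFun X Z μ := hXY.comp measurable_id (measurable_const_mul c).neg
  have hexpZ : (fun ω ↦ exp (t * Z ω)) = fun ω ↦ exp (-(t * c) * Y ω) := by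
    ext ω; simp only [Z]; ring_nf
  have hZ : Integrable (fun ω ↦ exp (t * Z ω)) μ := hexpZ ▸ hY
  have hmgfZ : mgf Z μ t = mgf Y μ (-(t * c)) := by rw [mgf, hexpZ]; rfl
  have hset : {ω | c * Y ω ≤ X ω} = {ω | 0 ≤ (X + Z) ω} := by ext ω; simp [Z]
  rw [hset, ← ofReal_measureReal, ← hmgfZ,
    ← hXZ.mgf_add hX.aestronglyMeasurable hZ.aestronglyMeasurable]
  refine ENNReal.ofReal_le_ofReal
    ((measure_ge_le_exp_mul_mgf 0 ht (hXZ.integrable_exp_mul_add hX hZ)).trans_eq ?_)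
  simp

lemma one_add_rpow_neg_le_two_rpow {u s : ℝ} (hu0 : 0 ≤ u) (hu1 : u ≤ 1) (hs : 0 ≤ s) :
    (1 + u) ^ (-s) ≤ 2 ^ (-(u * s)) := by
  have hbernoulli : (2 : ℝ) ^ u ≤ 1 + u := by
    simpa [one_add_one_eq_two] using rpow_one_add_le_one_add_mul_self (s := 1) (by norm_num) hu0 hu1
  calc (1 + u) ^ (-s) ≤ (2 ^ u) ^ (-s) :=
        rpow_le_rpow_of_nonpos (by positivity) hbernoulli (by linarith)
    _ = 2 ^ (-(u * s)) := by rw [← rpow_mul zero_le_two]; ring_nf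

lemma measure_mul_le_sq_le_of_gaussian_chiSq {Ω : Type*} [MeasurableSpace Ω] {μ : Measure Ω}
    [IsFiniteMeasure μ] {X Y : Ω → ℝ} {k c l : ℝ} (hk : 0 < k)
    (hX : μ.map X = gaussianReal 0 1) (hY : μ.map Y = gammaMeasure (k / 2) (1 / 2))
    (hXY : IndepFun X Y μ) (hc : 0 ≤ c) (hl0 : 0 < l) (hl1 : l < 1 / 2) :
    μ {ω | c * Y ω ≤ X ω ^ 2} ≤
      ENNReal.ofReal ((1 - 2 * l) ^ (-(1:ℝ)/2) * (1 + 2 * l * c) ^ (-k/2)) := by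
  have hlX : 2 * ((1 : ℝ≥0) : ℝ) * l < 1 := by rw [NNReal.coe_one]; linarith
  have hlY : -(l * c) < 1 / 2 := by nlinarith
  have hk2 : 0 < k / 2 := by positivity
  have hXY_sq : IndepFun (fun ω ↦ X ω ^ 2) Y μ := hXY.comp (measurable_id.pow_const 2) measurable_id
  have := measure_mul_le_le_ofReal_mgf_mul_mgf hXY_sq hl0.le
    (integrable_exp_mul_sq_of_map_eq_gaussianReal hX hlX)
    (integrable_exp_mul_of_map_eq_gammaMeasure hY hk2 one_half_pos hlY)
  rw [mgf_sq_of_map_eq_gaussianReal hX hlX,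
    mgf_of_map_eq_gammaMeasure hY hk2 one_half_pos hlY] at this
  convert this using 4 <;> push_cast <;> ring

theorem gaussian_chiSq_ratio_tail_bound_general
    {Ω : Type*} [MeasureSpace Ω] [IsProbabilityMeasure (ℙ : Measure Ω)]
    (s : ℕ) (hs : 0 < s)
    (x y : Ω → ℝ)
    (hxdist : Measure.map x ℙ = gaussianReal 0 1)
    (hydist : Measure.map y ℙ = gammaMeasure ((s : ℝ) / 2) (1 / 2))
    (hindep : IndepFun x y ℙ)
    (ε : ℝ) (hε : ε ∈ Set.Ioc (0:ℝ) 1) :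
    (∀ l ∈ Set.Ioo (0:ℝ) (1/2),
      ℙ {ω | ε ^ 2 * y ω ≤ x ω ^ 2} ≤
        ENNReal.ofReal ((1 - 2 * l) ^ (-(1:ℝ)/2) * (1 + 2 * l * ε ^ 2) ^ (-(s:ℝ)/2))) ∧
    ℙ {ω | ε ^ 2 * y ω ≤ x ω ^ 2} ≤
      ENNReal.ofReal (Real.sqrt 2 * (2 : ℝ) ^ (-(s:ℝ) * ε ^ 2 / 4)) := by
  have hbound (l : ℝ) (hl : l ∈ Ioo 0 (1/2)) :=
    measure_mul_le_sq_le_of_gaussian_chiSq (Nat.cast_pos.2 hs) hxdist hydist hindep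
      (sq_nonneg ε) hl.1 hl.2
  refine ⟨hbound, (hbound (1/4) ⟨by norm_num, by norm_num⟩).trans (ENNReal.ofReal_le_ofReal ?_)⟩
  have hsqrt : (1 - 2 * (1/4) : ℝ) ^ (-(1:ℝ)/2) = √2 := by
    rw [neg_div, rpow_neg (by norm_num), ← sqrt_eq_rpow, ← sqrt_inv]; norm_num
  have hε2 : ε ^ 2 / 2 ≤ 1 := by nlinarith [hε.1, hε.2]
  rw [hsqrt]
  gcongr
  calc (1 + 2 * (1/4) * ε ^ 2) ^ (-(s:ℝ)/2) = (1 + ε ^ 2 / 2) ^ (-((s:ℝ)/2)) := by ring_nf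
    _ ≤ 2 ^ (-(ε ^ 2 / 2 * (s / 2))) :=
      one_add_rpow_neg_le_two_rpow (by positivity) hε2 (by positivity)
    _ = 2 ^ (-(s:ℝ) * ε ^ 2 / 4) := by ring_nf

theorem gaussian_chiSq_ratio_tail_bound
    {Ω : Type*} [MeasureSpace Ω] [IsProbabilityMeasure (ℙ : Measure Ω)]
    (s : ℕ) (hs : 0 < s)
    (x y : Ω → ℝ) (hx : Measurable x) (hy : Measurable y)
    (hxdist : Measure.map x ℙ = gaussianReal 0 1)
    (hydist : Measure.map y ℙ = gammaMeasure ((s : ℝ) / 2) (1 / 2))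
    (hindep : IndepFun x y ℙ)
    (ε : ℝ) (hε : ε ∈ Set.Ioc (0:ℝ) 1) :
    (∀ l ∈ Set.Ioo (0:ℝ) (1/2),
      ℙ {ω | ε ^ 2 * y ω ≤ x ω ^ 2} ≤
        ENNReal.ofReal ((1 - 2 * l) ^ (-(1:ℝ)/2) * (1 + 2 * l * ε ^ 2) ^ (-(s:ℝ)/2))) ∧
    ℙ {ω | ε ^ 2 * y ω ≤ x ω ^ 2} ≤
      ENNReal.ofReal (Real.sqrt 2 * (2 : ℝ) ^ (-(s:ℝ) * ε ^ 2 / 4)) :=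
  gaussian_chiSq_ratio_tail_bound_general s hs x y hxdist hydist hindep ε hε
end

section
/- Let G_i^s be the Gaussian diagonal estimator of the i-th diagonal entry of A ∈ ℝ^{n×n} using s independent standard Gaussian query vectors. For ε ∈ (0,1], if s > 4 log₂(√2/δ)/ε², then P(|G_i^s − A_{ii}|² ≤ ε²(‖A_i‖₂² − A_{ii}²)) ≥ 1 − δ. -/
/-!
Write `x_k = v_k^i` for the `i`-th column of the query matrix and `r` for the `i`-th row of `A`
with its diagonal entry set to zero, so that `(A v_k)_i = A_ii x_k + r ⬝ v_k` and hence
`G_i^s - A_ii = (∑ₖ x_k (r ⬝ v_k)) / ∑ₖ x_k²`. The column `x` is independent of the other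
entries of the `v_k`, and for fixed `x` the numerator is a centred Gaussian with variance
`c ∑ₖ x_k²`, where `c = ‖A_i‖² - A_ii² = ‖r‖²`. Its Gaussian tail bounds the conditional failure
probability by `2 exp (-ε² ∑ₖ x_k² / 2)`, and averaging over the independent standard Gaussians
`x_k` gives `2 (1 + ε²)^(-s/2)`. Finally `log (1 + ε²) ≥ ε² log 2` for `ε ≤ 1`, so this is at
most `δ` once `s > 4 log₂ (√2 / δ) / ε²`.
-/

open MeasureTheory ProbabilityTheory Real Matrix
open scoped ENNReal NNReal

namespace ProbabilityTheory

lemma hasSubgaussianMGF_id_gaussianReal (v : ℝ≥0) :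
    HasSubgaussianMGF id v (gaussianReal 0 v) where
  integrable_exp_mul t := integrable_exp_mul_gaussianReal t
  mgf_le t := by simp [mgf_id_gaussianReal]

variable {Ω : Type*} {mΩ : MeasurableSpace Ω} {μ : Measure Ω}

/-- The rate `r` replaces `t ^ 2 / (2 * c)`, which is junk for `c = 0`. -/
lemma HasSubgaussianMGF.measure_lt_abs_le [IsFiniteMeasure μ] {X : Ω → ℝ} {c : ℝ≥0}
    (h : HasSubgaussianMGF X c μ) {t r : ℝ} (ht : 0 ≤ t) (hr : 2 * c * r ≤ t ^ 2) :
    μ {ω | t < |X ω|} ≤ ENNReal.ofReal (2 * exp (-r)) := by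
  rcases eq_or_ne c 0 with rfl | hc
  · have hnull : μ {ω | t < |X ω|} = 0 := by
      rw [measure_eq_zero_iff_ae_notMem]
      filter_upwards [h.ae_eq_zero_of_hasSubgaussianMGF_zero] with ω hω
      simp [hω, ht]
    simp [hnull]
  have htail : exp (-t ^ 2 / (2 * c)) ≤ exp (-r) := by
    have hcpos : (0 : ℝ) < c := NNReal.coe_pos.2 (pos_iff_ne_zero.2 hc)
    gcongr
    rw [neg_div, neg_le_neg_iff, le_div_iff₀ (by positivity)]
    linarith
  have hsub : {ω | t < |X ω|} ⊆ {ω | t ≤ X ω} ∪ {ω | t ≤ (-X) ω} := by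
    intro ω (hω : t < |X ω|)
    rcases lt_abs.mp hω with h | h
    · exact Or.inl h.le
    · exact Or.inr h.le
  calc μ {ω | t < |X ω|} ≤ μ {ω | t ≤ X ω} + μ {ω | t ≤ (-X) ω} :=
        (measure_mono hsub).trans (measure_union_le _ _)
    _ = ENNReal.ofReal (μ.real {ω | t ≤ X ω}) + ENNReal.ofReal (μ.real {ω | t ≤ (-X) ω}) := by
        rw [ofReal_measureReal, ofReal_measureReal]
    _ ≤ ENNReal.ofReal (exp (-r)) + ENNReal.ofReal (exp (-r)) := by
        gcongr
        · exact (h.measure_ge_le ht).trans htail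
        · exact (h.neg.measure_ge_le ht).trans htail
    _ = ENNReal.ofReal (2 * exp (-r)) := by
        rw [two_mul, ENNReal.ofReal_add (exp_pos _).le (exp_pos _).le]

lemma iIndepFun.hasSubgaussianMGF_sum_mul {ι : Type*} [Fintype ι] {Z : ι → Ω → ℝ}
    (hind : iIndepFun Z μ) (hmeas : ∀ p, Measurable (Z p))
    (hZ : ∀ p, μ.map (Z p) = gaussianReal 0 1) (a : ι → ℝ) :
    HasSubgaussianMGF (fun ω ↦ ∑ p, a p * Z p ω) (∑ p, a p ^ 2).toNNReal μ := by
  have hstd (p : ι) : HasSubgaussianMGF (Z p) 1 μ := by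
    rw [← HasSubgaussianMGF.id_map_iff (hmeas p).aemeasurable, hZ p]
    exact hasSubgaussianMGF_id_gaussianReal 1
  convert HasSubgaussianMGF.sum_of_iIndepFun (s := Finset.univ)
    (hind.comp (fun p x ↦ a p * x) fun p ↦ measurable_const_mul _)
    fun p _ ↦ (hstd p).const_mul (a p) using 2
  · rfl
  · ext
    rw [Real.coe_toNNReal _ (Finset.sum_nonneg fun p _ ↦ sq_nonneg (a p)), NNReal.coe_sum]
    exact Finset.sum_congr rfl fun p _ ↦ (mul_one (a p ^ 2)).symm

lemma lintegral_exp_neg_mul_sq_gaussianReal {a : ℝ} (ha : 0 < 1 + 2 * a) :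
    ∫⁻ x, ENNReal.ofReal (exp (-(a * x ^ 2))) ∂gaussianReal 0 1 =
      ENNReal.ofReal (√(1 + 2 * a))⁻¹ := by
  have hb : 0 < a + 1 / 2 := by linarith
  have hpdf (x : ℝ) : gaussianPDFReal 0 1 x * exp (-(a * x ^ 2)) =
      (√(2 * π))⁻¹ * exp (-(a + 1 / 2) * x ^ 2) := by
    rw [gaussianPDFReal_def, mul_assoc, ← exp_add]
    simp only [sub_zero, NNReal.coe_one, mul_one]
    ring_nf
  rw [gaussianReal_of_var_ne_zero 0 one_ne_zero, lintegral_withDensity_eq_lintegral_mul₀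
    (measurable_gaussianPDF 0 1).aemeasurable (by fun_prop)]
  simp_rw [Pi.mul_apply, gaussianPDF, ← ENNReal.ofReal_mul (gaussianPDFReal_nonneg 0 1 _), hpdf]
  rw [← ofReal_integral_eq_lintegral_ofReal ((integrable_exp_neg_mul_sq hb).const_mul _)
      (ae_of_all _ fun x ↦ by positivity), integral_const_mul, integral_gaussian]
  congr 1
  rw [← sqrt_inv, ← sqrt_inv, ← sqrt_mul (by positivity)]
  congr 1
  rw [show a + 1 / 2 = (1 + 2 * a) / 2 by ring]
  field_simp

lemma iIndepFun.lintegral_exp_neg_mul_sum_sq {κ : Type*} [Fintype κ] {X : κ → Ω → ℝ}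
    (hind : iIndepFun X μ) (hmeas : ∀ k, Measurable (X k))
    (hX : ∀ k, μ.map (X k) = gaussianReal 0 1) {a : ℝ} (ha : 0 < 1 + 2 * a) :
    ∫⁻ ω, ENNReal.ofReal (exp (-(a * ∑ k, X k ω ^ 2))) ∂μ =
      ENNReal.ofReal (√(1 + 2 * a))⁻¹ ^ Fintype.card κ := by
  let f : ℝ → ℝ≥0∞ := fun x ↦ ENNReal.ofReal (exp (-(a * x ^ 2)))
  have hf : Measurable f := by fun_prop
  have hprod (ω : Ω) : ENNReal.ofReal (exp (-(a * ∑ k, X k ω ^ 2))) = ∏ k, f (X k ω) := by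
    rw [Finset.mul_sum, ← Finset.sum_neg_distrib, exp_sum,
      ENNReal.ofReal_prod_of_nonneg fun k _ ↦ (exp_pos _).le]
  have hfactor (k : κ) : ∫⁻ ω, f (X k ω) ∂μ = ENNReal.ofReal (√(1 + 2 * a))⁻¹ := by
    rw [← lintegral_map hf (hmeas k), hX k, lintegral_exp_neg_mul_sq_gaussianReal ha]
  simp_rw [hprod]
  rw [lintegral_prod_eq_prod_lintegral_of_indepFun Finset.univ (fun k ω ↦ f (X k ω))
    (hind.comp (fun _ ↦ f) fun _ ↦ hf) fun k ↦ hf.comp (hmeas k)]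
  simp_rw [hfactor, Finset.prod_const, Finset.card_univ]

lemma measure_eq_zero_of_map_eq_gaussianReal {X : Ω → ℝ} (hX : Measurable X) {m : ℝ}
    {σ : ℝ≥0} (hlaw : μ.map X = gaussianReal m σ) (hσ : σ ≠ 0) (a : ℝ) :
    μ {ω | X ω = a} = 0 := by
  have := nullSingletonClass_gaussianReal (μ := m) hσ
  change μ (X ⁻¹' {a}) = 0
  rw [← Measure.map_apply hX (measurableSet_singleton a), hlaw]
  exact measure_singleton a

lemma IndepFun.measure_prodMk_mem_eq_lintegral [IsFiniteMeasure μ] {α β : Type*}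
    [MeasurableSpace α] [MeasurableSpace β] {U : Ω → α} {W : Ω → β} (hUW : IndepFun U W μ)
    (hU : Measurable U) (hW : Measurable W) {B : Set (α × β)} (hB : MeasurableSet B) :
    μ ((fun ω ↦ (U ω, W ω)) ⁻¹' B) = ∫⁻ ω, μ ((fun ω' ↦ (U ω, W ω')) ⁻¹' B) ∂μ := by
  have hlaw := (indepFun_iff_map_prod_eq_prod_map_map hU.aemeasurable hW.aemeasurable).1 hUW
  rw [← Measure.map_apply (hU.prodMk hW) hB, hlaw, Measure.prod_apply hB,
    lintegral_map (measurable_measure_prodMk_left hB) hU]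
  refine lintegral_congr fun ω ↦ ?_
  rw [Measure.map_apply hW (measurable_prodMk_left hB)]
  rfl

end ProbabilityTheory

lemma mul_log_two_le_log_one_add {x : ℝ} (h0 : 0 ≤ x) (h1 : x ≤ 1) :
    x * log 2 ≤ log (1 + x) := by
  have h := strictConcaveOn_log_Ioi.concaveOn.2 (Set.mem_Ioi.2 one_pos) (Set.mem_Ioi.2 two_pos)
    (sub_nonneg.2 h1) h0 (sub_add_cancel 1 x)
  simp only [smul_eq_mul, log_one, mul_zero, zero_add] at h
  rwa [show (1 - x) * 1 + x * 2 = 1 + x by ring] at h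

lemma two_mul_inv_sqrt_one_add_sq_pow_le {s : ℕ} {ε δ : ℝ} (hε0 : 0 < ε) (hε1 : ε ≤ 1)
    (hδ0 : 0 < δ) (hδ1 : δ < 1) (hs : 4 * logb 2 (√2 / δ) / ε ^ 2 < s) :
    2 * (√(1 + ε ^ 2))⁻¹ ^ s ≤ δ := by
  have hlog2 : 0 < log 2 := log_pos one_lt_two
  have hlogδ : log δ < 0 := log_neg hδ0 hδ1
  have hquery : 2 * log 2 - 4 * log δ < s * (ε ^ 2 * log 2) := by
    rw [div_lt_iff₀ (by positivity), logb, log_div (by positivity) hδ0.ne',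
      log_sqrt zero_le_two, mul_div_assoc', div_lt_iff₀ hlog2] at hs
    linarith
  have hexponent : log 2 - log δ ≤ s / 2 * log (1 + ε ^ 2) := by
    have := mul_log_two_le_log_one_add (sq_nonneg ε) (pow_le_one₀ hε0.le hε1)
    nlinarith [Nat.cast_nonneg (α := ℝ) s]
  calc 2 * (√(1 + ε ^ 2))⁻¹ ^ s = 2 * exp (-(s / 2 * log (1 + ε ^ 2))) := by
        rw [← exp_log (by positivity : 0 < (√(1 + ε ^ 2))⁻¹ ^ s), log_pow, log_inv,
          log_sqrt (by positivity)]
        ring_nf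
    _ ≤ 2 * exp (-(log 2 - log δ)) := by gcongr
    _ = δ := by
        rw [neg_sub, exp_sub, exp_log hδ0, exp_log two_pos]
        field_simp

section UpdateDotProduct

variable {ι R : Type*} [Fintype ι] [DecidableEq ι]

lemma dotProduct_eq_mul_add_update_zero_dotProduct [NonUnitalNonAssocSemiring R] (f x : ι → R)
    (j : ι) :
    f ⬝ᵥ x = f j * x j + Function.update f j 0 ⬝ᵥ x := by
  simp only [dotProduct, ← Finset.add_sum_erase _ _ (Finset.mem_univ j), Function.update_self,
    zero_mul, zero_add]
  congr 1
  exact Finset.sum_congr rfl fun l hl ↦ by rw [Function.update_of_ne (Finset.ne_of_mem_erase hl)]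

lemma update_zero_dotProduct [NonUnitalNonAssocSemiring R] (f x : ι → R) (j : ι) :
    Function.update f j 0 ⬝ᵥ x = f ⬝ᵥ Function.update x j 0 := by
  simp only [dotProduct, Function.update_apply]
  exact Finset.sum_congr rfl fun l _ ↦ by split_ifs <;> simp

lemma update_zero_dotProduct_self [NonUnitalNonAssocRing R] (f : ι → R) (j : ι) :
    Function.update f j 0 ⬝ᵥ Function.update f j 0 = f ⬝ᵥ f - f j * f j := by
  rw [update_zero_dotProduct, Function.update_idem, ← update_zero_dotProduct,
    dotProduct_eq_mul_add_update_zero_dotProduct f f j, add_sub_cancel_left]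

end UpdateDotProduct

section DiagonalEstimator

variable {s n : ℕ}

lemma sum_mul_mulVec_div_sub_diag_eq (A : Matrix (Fin n) (Fin n) ℝ) (i : Fin n)
    {w : Fin s → Fin n → ℝ} (hw : ∑ k, w k i ^ 2 ≠ 0) :
    (∑ k, w k i * (A *ᵥ w k) i) / (∑ k, w k i ^ 2) - A i i =
      (∑ k, w k i * (A *ᵥ Function.update (w k) i 0) i) / (∑ k, w k i ^ 2) := by
  have hrow (x : Fin n → ℝ) : (A *ᵥ x) i = A i ⬝ᵥ x := rfl
  rw [sub_eq_iff_eq_add, div_add' _ _ _ hw, Finset.mul_sum, ← Finset.sum_add_distrib]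
  congr 1
  refine Finset.sum_congr rfl fun k _ ↦ ?_
  rw [hrow, hrow, ← update_zero_dotProduct,
    dotProduct_eq_mul_add_update_zero_dotProduct (A i) (w k) i]
  ring

lemma lt_abs_sum_mul_mulVec_update_of_lt_sq (A : Matrix (Fin n) (Fin n) ℝ) (i : Fin n)
    {w : Fin s → Fin n → ℝ} (hw : 0 < ∑ k, w k i ^ 2) {ε c : ℝ} (hε : 0 ≤ ε) (hc : 0 ≤ c)
    (h : ε ^ 2 * c < |(∑ k, w k i * (A *ᵥ w k) i) / (∑ k, w k i ^ 2) - A i i| ^ 2) :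
    ε * √c * ∑ k, w k i ^ 2 < |∑ k, w k i * (A *ᵥ Function.update (w k) i 0) i| := by
  rw [sum_mul_mulVec_div_sub_diag_eq A i hw.ne', sq_abs, div_pow, lt_div_iff₀ (by positivity)] at h
  rw [← sq_lt_sq₀ (by positivity) (abs_nonneg _), sq_abs, mul_pow, mul_pow, sq_sqrt hc]
  exact h

variable {Ω : Type*} [MeasureSpace Ω] {v : Ω → Fin s → Fin n → ℝ}

lemma ProbabilityTheory.iIndepFun.indepFun_col_update_zero
    (hmeas : ∀ k j, Measurable fun ω ↦ v ω k j)
    (hindep : iIndepFun (fun p : Fin s × Fin n ↦ fun ω ↦ v ω p.1 p.2) ℙ) (i : Fin n) :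
    IndepFun (fun ω k ↦ v ω k i) (fun ω k ↦ Function.update (v ω k) i 0) ℙ := by
  let col : Finset (Fin s × Fin n) := {p | p.2 = i}
  let rest : Finset (Fin s × Fin n) := {p | p.2 ≠ i}
  have hblocks := hindep.indepFun_finset col rest (Finset.disjoint_filter_filter_not _ _ _)
    fun p ↦ hmeas p.1 p.2
  let restrictCol : (col → ℝ) → Fin s → ℝ := fun y k ↦ y ⟨(k, i), by simp [col]⟩
  let extendRest : (rest → ℝ) → Fin s → Fin n → ℝ := fun y k j ↦
    if hj : j = i then 0 else y ⟨(k, j), by simp [rest, hj]⟩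
  have hrestrict : Measurable restrictCol := by fun_prop
  have hextend : Measurable extendRest := by
    refine measurable_pi_lambda _ fun k ↦ measurable_pi_lambda _ fun j ↦ ?_
    by_cases hj : j = i
    · simp only [extendRest, hj, dite_true]
      exact measurable_const
    · simp only [extendRest, hj, dite_false]
      exact measurable_pi_apply _
  convert hblocks.comp hrestrict hextend using 1
  · rfl
  funext ω k j
  by_cases hj : j = i <;> simp [extendRest, hj]

lemma measure_lt_abs_sum_mul_mulVec_update_le
    (hmeas : ∀ k j, Measurable fun ω ↦ v ω k j)
    (hdist : ∀ k j, (ℙ : Measure Ω).map (fun ω ↦ v ω k j) = gaussianReal 0 1)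
    (hindep : iIndepFun (fun p : Fin s × Fin n ↦ fun ω ↦ v ω p.1 p.2) ℙ)
    (A : Matrix (Fin n) (Fin n) ℝ) (i : Fin n) (u : Fin s → ℝ) {ε : ℝ} (hε : 0 ≤ ε) :
    ℙ {ω | ε * √(∑ j, A i j ^ 2 - A i i ^ 2) * ∑ k, u k ^ 2 <
        |∑ k, u k * (A *ᵥ Function.update (v ω k) i 0) i|} ≤
      ENNReal.ofReal (2 * exp (-(ε ^ 2 / 2 * ∑ k, u k ^ 2))) := by
  have : IsProbabilityMeasure (ℙ : Measure Ω) := hindep.isProbabilityMeasure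
  set r := Function.update (A i) i 0
  have hr : r ⬝ᵥ r = ∑ j, A i j ^ 2 - A i i ^ 2 := by
    rw [update_zero_dotProduct_self]
    simp only [dotProduct, sq]
  have hr0 : 0 ≤ r ⬝ᵥ r := Finset.sum_nonneg fun j _ ↦ mul_self_nonneg _
  have hlin (ω : Ω) : ∑ k, u k * (A *ᵥ Function.update (v ω k) i 0) i =
      ∑ p : Fin s × Fin n, u p.1 * r p.2 * v ω p.1 p.2 := by
    simp only [Fintype.sum_prod_type, mul_assoc, ← Finset.mul_sum]
    exact Finset.sum_congr rfl fun k _ ↦ congrArg (u k * ·) (update_zero_dotProduct _ _ _).symm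
  have hvar : ∑ p : Fin s × Fin n, (u p.1 * r p.2) ^ 2 = (∑ k, u k ^ 2) * (r ⬝ᵥ r) := by
    simp_rw [Fintype.sum_prod_type, mul_pow, ← Finset.mul_sum, Finset.sum_mul, dotProduct, sq]
  simp_rw [hlin]
  refine (hindep.hasSubgaussianMGF_sum_mul (fun p ↦ hmeas p.1 p.2) (fun p ↦ hdist p.1 p.2)
    _).measure_lt_abs_le (by positivity) (le_of_eq ?_)
  rw [Real.coe_toNNReal _ (Finset.sum_nonneg fun p _ ↦ sq_nonneg _), hvar, ← hr, mul_pow,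
    mul_pow, sq_sqrt hr0]
  ring

lemma measure_lt_sq_estimator_sub_diag_le (hs : 0 < s)
    (hmeas : ∀ k j, Measurable fun ω ↦ v ω k j)
    (hdist : ∀ k j, (ℙ : Measure Ω).map (fun ω ↦ v ω k j) = gaussianReal 0 1)
    (hindep : iIndepFun (fun p : Fin s × Fin n ↦ fun ω ↦ v ω p.1 p.2) ℙ)
    (A : Matrix (Fin n) (Fin n) ℝ) (i : Fin n) {ε : ℝ} (hε : 0 ≤ ε) :
    ℙ {ω | ε ^ 2 * (∑ j, A i j ^ 2 - A i i ^ 2) <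
        |(∑ k, v ω k i * (A *ᵥ v ω k) i) / (∑ k, v ω k i ^ 2) - A i i| ^ 2} ≤
      ENNReal.ofReal (2 * (√(1 + ε ^ 2))⁻¹ ^ s) := by
  have : IsProbabilityMeasure (ℙ : Measure Ω) := hindep.isProbabilityMeasure
  set c := ∑ j, A i j ^ 2 - A i i ^ 2
  have hc : 0 ≤ c :=
    sub_nonneg.2 (Finset.single_le_sum (fun j _ ↦ sq_nonneg (A i j)) (Finset.mem_univ i))
  let k₀ : Fin s := ⟨0, hs⟩
  let x : Ω → Fin s → ℝ := fun ω k ↦ v ω k i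
  let W : Ω → Fin s → Fin n → ℝ := fun ω k ↦ Function.update (v ω k) i 0
  let B : Set ((Fin s → ℝ) × (Fin s → Fin n → ℝ)) :=
    {p | ε * √c * ∑ k, p.1 k ^ 2 < |∑ k, p.1 k * (A *ᵥ p.2 k) i|}
  have hW : Measurable W := measurable_pi_lambda _ fun k ↦
    measurable_update'.comp ((measurable_pi_lambda _ (hmeas k)).prodMk measurable_const)
  have hB : MeasurableSet B := by
    simp only [B, mulVec, dotProduct]
    exact measurableSet_lt (by fun_prop) (by fun_prop)
  have hsub : {ω | ε ^ 2 * c <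
      |(∑ k, v ω k i * (A *ᵥ v ω k) i) / (∑ k, v ω k i ^ 2) - A i i| ^ 2} ⊆
      {ω | v ω k₀ i = 0} ∪ (fun ω ↦ (x ω, W ω)) ⁻¹' B := by
    intro ω hω
    by_cases h0 : v ω k₀ i = 0
    · exact Or.inl h0
    have hS : 0 < ∑ k, v ω k i ^ 2 := (sq_pos_of_ne_zero h0).trans_le
      (Finset.single_le_sum (fun k _ ↦ sq_nonneg (v ω k i)) (Finset.mem_univ k₀))
    exact Or.inr (lt_abs_sum_mul_mulVec_update_of_lt_sq A i hS hε hc hω)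
  have hcol : iIndepFun (fun k ω ↦ v ω k i) ℙ :=
    hindep.precomp (g := fun k ↦ (k, i)) fun k k' h ↦ (Prod.ext_iff.1 h).1
  calc _ ≤ ℙ {ω | v ω k₀ i = 0} + ℙ ((fun ω ↦ (x ω, W ω)) ⁻¹' B) :=
        (measure_mono hsub).trans (measure_union_le _ _)
    _ = ∫⁻ ω, ℙ ((fun ω' ↦ (x ω, W ω')) ⁻¹' B) := by
        rw [measure_eq_zero_of_map_eq_gaussianReal (hmeas k₀ i) (hdist k₀ i) one_ne_zero,
          zero_add, (hindep.indepFun_col_update_zero hmeas i)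
          |>.measure_prodMk_mem_eq_lintegral (by fun_prop) hW hB]
    _ ≤ ∫⁻ ω, ENNReal.ofReal 2 * ENNReal.ofReal (exp (-(ε ^ 2 / 2 * ∑ k, x ω k ^ 2))) := by
        refine lintegral_mono fun ω ↦ ?_
        rw [← ENNReal.ofReal_mul zero_le_two]
        exact measure_lt_abs_sum_mul_mulVec_update_le hmeas hdist hindep A i (x ω) hε
    _ = ENNReal.ofReal (2 * (√(1 + ε ^ 2))⁻¹ ^ s) := by
        rw [lintegral_const_mul _ (by fun_prop), hcol.lintegral_exp_neg_mul_sum_sq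
          (fun k ↦ hmeas k i) (fun k ↦ hdist k i) (by positivity), Fintype.card_fin,
          mul_div_cancel₀ _ two_ne_zero, ← ENNReal.ofReal_pow (by positivity),
          ← ENNReal.ofReal_mul zero_le_two]

end DiagonalEstimator

theorem gaussian_diagonal_estimator_element_bound
    {n s : ℕ} (hs : 0 < s) (A : Matrix (Fin n) (Fin n) ℝ) (i : Fin n)
    {Ω : Type*} [MeasureSpace Ω] [IsProbabilityMeasure (ℙ : Measure Ω)]
    (v : Ω → Fin s → Fin n → ℝ)
    (hmeas : ∀ k j, Measurable (fun ω => v ω k j))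
    (hdist : ∀ k j, Measure.map (fun ω => v ω k j) ℙ = gaussianReal 0 1)
    (hindep : iIndepFun
      (fun p : Fin s × Fin n => fun ω => v ω p.1 p.2) ℙ)
    (G : Ω → ℝ)
    (hG : G = fun ω => (∑ k, v ω k i * A.mulVec (v ω k) i) / (∑ k, (v ω k i) ^ 2))
    (ε δ : ℝ) (hε : ε ∈ Set.Ioc (0:ℝ) 1) (hδ : δ ∈ Set.Ioo (0:ℝ) 1)
    (hquery : (s : ℝ) > 4 * Real.logb 2 (Real.sqrt 2 / δ) / ε ^ 2) :
    ENNReal.ofReal (1 - δ) ≤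
      ℙ {ω | |G ω - A i i| ^ 2 ≤ ε ^ 2 * ((∑ j, A i j ^ 2) - A i i ^ 2)} := by
  obtain ⟨hε0, hε1⟩ := hε
  obtain ⟨hδ0, hδ1⟩ := hδ
  have hbad : ℙ {ω | ε ^ 2 * (∑ j, A i j ^ 2 - A i i ^ 2) < |G ω - A i i| ^ 2} ≤
      ENNReal.ofReal δ := by
    subst hG
    exact (measure_lt_sq_estimator_sub_diag_le hs hmeas hdist hindep A i hε0.le).trans
      (ENNReal.ofReal_le_ofReal (two_mul_inv_sqrt_one_add_sq_pow_le hε0 hε1 hδ0 hδ1 hquery))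
  have hcover : 1 ≤ ℙ {ω | |G ω - A i i| ^ 2 ≤ ε ^ 2 * ((∑ j, A i j ^ 2) - A i i ^ 2)} +
      ℙ {ω | ε ^ 2 * (∑ j, A i j ^ 2 - A i i ^ 2) < |G ω - A i i| ^ 2} := by
    rw [← measure_univ (μ := (ℙ : Measure Ω))]
    exact (measure_mono fun ω _ ↦ le_or_gt (|G ω - A i i| ^ 2) _).trans (measure_union_le _ _)
  calc ENNReal.ofReal (1 - δ) = 1 - ENNReal.ofReal δ := by
        rw [ENNReal.ofReal_sub _ hδ0.le, ENNReal.ofReal_one]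
    _ ≤ _ := tsub_le_tsub_left hbad 1
    _ ≤ _ := tsub_le_iff_right.2 hcover
end

section
/- Let A be a real symmetric positive semi-definite n×n matrix and A_r its best rank-r approximation in the Frobenius norm (spectral truncation to the top r eigenvalues). Then ‖A − A_r‖_F ≤ tr(A)/√r. -/
open Matrix

theorem low_rank_remainder_frobenius_bound
    {n : ℕ} (A V : Matrix (Fin n) (Fin n) ℝ) (lam : Fin n → ℝ)
    (hA : A.PosSemidef) (hV : V * Vᵀ = 1)
    (hdecomp : A = V * Matrix.diagonal lam * Vᵀ)
    (hnonneg : ∀ i, 0 ≤ lam i)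
    (hsorted : ∀ i j : Fin n, i ≤ j → lam j ≤ lam i)
    (r : ℕ) (hr : 0 < r) (Ar : Matrix (Fin n) (Fin n) ℝ)
    (hAr : Ar = V * Matrix.diagonal (fun j : Fin n => if (j : ℕ) < r then lam j else 0) * Vᵀ) :
    Real.sqrt (∑ i, ∑ j, (A - Ar) i j ^ 2) ≤ A.trace / Real.sqrt r := by
  have hVtV : Vᵀ * V = 1 := mul_eq_one_comm.mp hV
  set ν : Fin n → ℝ := fun j => if (j : ℕ) < r then 0 else lam j with hν
  set D : Matrix (Fin n) (Fin n) ℝ := Matrix.diagonal ν with hD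
  have hM : A - Ar = V * D * Vᵀ := by
    rw [hdecomp, hAr, ← Matrix.sub_mul, ← Matrix.mul_sub, Matrix.diagonal_sub]
    rw [hD, hν]
    have : (fun i => lam i - if (i:ℕ) < r then lam i else 0) = (fun j : Fin n => if (j:ℕ) < r then 0 else lam j) := by
      funext j
      by_cases h : (j : ℕ) < r <;> simp [h]
    rw [this]
  have hMT : (V * D * Vᵀ)ᵀ = V * D * Vᵀ := by
    simp [Matrix.transpose_mul, hD, Matrix.diagonal_transpose, Matrix.mul_assoc]
  have htr : ∀ d : Fin n → ℝ, (V * Matrix.diagonal d * Vᵀ).trace = ∑ i, d i := by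
    intro d
    rw [Matrix.trace_mul_cycle, hVtV, Matrix.one_mul, Matrix.trace_diagonal]
  have hprod : (V * D * Vᵀ) * (V * D * Vᵀ) = V * Matrix.diagonal (fun j => ν j * ν j) * Vᵀ := by
    calc (V * D * Vᵀ) * (V * D * Vᵀ) = V * D * (Vᵀ * V) * (D * Vᵀ) := by noncomm_ring
      _ = V * (D * D) * Vᵀ := by rw [hVtV]; noncomm_ring
      _ = V * Matrix.diagonal (fun j => ν j * ν j) * Vᵀ := by
          rw [hD, Matrix.diagonal_mul_diagonal]
  have hfro : ∑ i, ∑ j, (A - Ar) i j ^ 2 = ∑ j, ν j * ν j := by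
    have h1 : ∑ i, ∑ j, (A - Ar) i j ^ 2 = ((A - Ar) * (A - Ar)ᵀ).trace := by
      simp [Matrix.trace, Matrix.diag, Matrix.mul_apply, sq]
    rw [h1, hM, hMT, hprod, htr]
  have htrA : A.trace = ∑ i, lam i := by rw [hdecomp, htr]
  have hT : 0 ≤ ∑ i, lam i := Finset.sum_nonneg fun i _ => hnonneg i
  set T : ℝ := ∑ i, lam i with hTdef
  have hνnonneg : ∀ j, 0 ≤ ν j := by
    intro j; simp only [ν]; split
    · exact le_refl 0
    · exact hnonneg j
  have hνle : ∀ j, ν j ≤ T / r := by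
    intro j
    simp only [ν]
    split
    · positivity
    · rename_i hj
      rw [le_div_iff₀ (by exact_mod_cast hr)]
      have hrj : r ≤ (j : ℕ) := not_lt.mp hj
      have hrn : r ≤ n := le_of_lt (lt_of_le_of_lt hrj j.isLt)
      calc lam j * r = ∑ _i : Fin r, lam j := by
            simp [Finset.sum_const, mul_comm]
        _ ≤ ∑ i : Fin r, lam (Fin.castLE hrn i) := by
            refine Finset.sum_le_sum fun i _ => hsorted _ j ?_
            simp only [Fin.le_def, Fin.coe_castLE]
            exact le_trans (le_of_lt i.isLt) hrj
        _ = ∑ i ∈ Finset.univ.map (Fin.castLEEmb hrn), lam i := by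
            rw [Finset.sum_map]; rfl
        _ ≤ T := by
            refine Finset.sum_le_sum_of_subset_of_nonneg (Finset.subset_univ _)
              fun i _ _ => hnonneg i
  have hνleLam : ∀ j, ν j ≤ lam j := by
    intro j; simp only [ν]; split
    · exact hnonneg j
    · exact le_refl _
  have key : ∑ j, ν j * ν j ≤ T ^ 2 / r := by
    calc ∑ j, ν j * ν j ≤ ∑ j, (T / r) * ν j := by
          refine Finset.sum_le_sum fun j _ => mul_le_mul_of_nonneg_right (hνle j) (hνnonneg j)
      _ = (T / r) * ∑ j, ν j := by rw [Finset.mul_sum]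
      _ ≤ (T / r) * T := by
          refine mul_le_mul_of_nonneg_left ?_ (by positivity)
          exact le_trans (Finset.sum_le_sum fun j _ => hνleLam j) (le_of_eq rfl)
      _ = T ^ 2 / r := by ring
  rw [hfro, htrA]
  calc Real.sqrt (∑ j, ν j * ν j) ≤ Real.sqrt (T ^ 2 / r) := Real.sqrt_le_sqrt key
    _ = T / Real.sqrt r := by
        rw [Real.sqrt_div (sq_nonneg T), Real.sqrt_sq hT]
end
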